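/- For a finitely-supported joint pmf p(x,y) with strictly positive marginals, the discrete Adaptive Mutual Information with φ ≡ 1, I₁(X;Y) = Σ_{x,y} p(x)p(y) g(p(x,y)/(p(x)p(y))) with g(t) = (t-1)^2/(2(t+1)), satisfies 0 ≤ I₁(X;Y) ≤ 1. -/

import Mathlib

/-! For `t ≥ 0` one has `0 ≤ g t ≤ (t + 1) / 2`, the upper bound being `(t - 1)² ≤ (t + 1)²`.
Multiplying by `p(x)p(y)` bounds each term by `(p(x,y) + p(x)p(y)) / 2`, and both `p(x,y)`
and `p(x)p(y)` sum to `1`. -/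

lemma sq_sub_one_div_two_mul_add_one_nonneg {t : ℝ} (ht : -1 < t) :
    0 ≤ (t - 1) ^ 2 / (2 * (t + 1)) := by
  have : 0 < t + 1 := by linarith
  positivity

lemma sq_sub_one_div_two_mul_add_one_le {t : ℝ} (ht : 0 ≤ t) :
    (t - 1) ^ 2 / (2 * (t + 1)) ≤ (t + 1) / 2 := by
  rw [div_le_div_iff₀ (by linarith) two_pos]
  nlinarith

section Perspective

variable {ι : Type*} (s : Finset ι) {f : ℝ → ℝ} {P Q : ι → ℝ}

theorem Finset.sum_mul_apply_div_nonneg (hf : ∀ t, 0 ≤ t → 0 ≤ f t)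
    (hP : ∀ i ∈ s, 0 ≤ P i) (hQ : ∀ i ∈ s, 0 < Q i) :
    0 ≤ ∑ i ∈ s, Q i * f (P i / Q i) :=
  Finset.sum_nonneg fun i hi ↦
    mul_nonneg (hQ i hi).le (hf _ (div_nonneg (hP i hi) (hQ i hi).le))

theorem Finset.sum_mul_apply_div_le (hf : ∀ t, 0 ≤ t → f t ≤ (t + 1) / 2)
    (hP : ∀ i ∈ s, 0 ≤ P i) (hQ : ∀ i ∈ s, 0 < Q i) :
    ∑ i ∈ s, Q i * f (P i / Q i) ≤ (∑ i ∈ s, P i + ∑ i ∈ s, Q i) / 2 := by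
  rw [← Finset.sum_add_distrib, Finset.sum_div]
  refine Finset.sum_le_sum fun i hi ↦ ?_
  have hQi := hQ i hi
  calc Q i * f (P i / Q i) ≤ Q i * ((P i / Q i + 1) / 2) :=
        mul_le_mul_of_nonneg_left (hf _ (div_nonneg (hP i hi) hQi.le)) hQi.le
    _ = (P i + Q i) / 2 := by field_simp

end Perspective

theorem discrete_ami_phi_one_bounds {α β : Type*} [Fintype α] [Fintype β]
    (p : α → β → ℝ) (hp0 : ∀ x y, 0 ≤ p x y) (hp1 : ∑ x, ∑ y, p x y = 1)
    (px : α → ℝ) (py : β → ℝ)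
    (hpx : ∀ x, px x = ∑ y, p x y) (hpy : ∀ y, py y = ∑ x, p x y)
    (hpx0 : ∀ x, 0 < px x) (hpy0 : ∀ y, 0 < py y)
    (g : ℝ → ℝ) (hg : ∀ t : ℝ, g t = (t - 1)^2 / (2 * (t + 1))) :
    0 ≤ ∑ x, ∑ y, px x * py y * g (p x y / (px x * py y)) ∧
      ∑ x, ∑ y, px x * py y * g (p x y / (px x * py y)) ≤ 1 := by
  have hsx : ∑ x, px x = 1 := by simpa only [hpx] using hp1
  have hsy : ∑ y, py y = 1 := by simpa only [hpy, Finset.sum_comm (γ := α)] using hp1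
  have hP : ∀ z ∈ (Finset.univ : Finset (α × β)), 0 ≤ p z.1 z.2 := fun z _ ↦ hp0 z.1 z.2
  have hQ : ∀ z ∈ (Finset.univ : Finset (α × β)), 0 < px z.1 * py z.2 :=
    fun z _ ↦ mul_pos (hpx0 z.1) (hpy0 z.2)
  have hsQ : ∑ z : α × β, px z.1 * py z.2 = 1 := by
    rw [Fintype.sum_prod_type' (f := fun x y ↦ px x * py y), ← Finset.sum_mul_sum, hsx, hsy,
      one_mul]
  rw [← Fintype.sum_prod_type' (f := fun x y ↦ px x * py y * g (p x y / (px x * py y)))]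
  refine ⟨Finset.sum_mul_apply_div_nonneg _ (fun t ht ↦ ?_) hP hQ, ?_⟩
  · exact hg t ▸ sq_sub_one_div_two_mul_add_one_nonneg (by linarith)
  · calc _ ≤ (∑ z : α × β, p z.1 z.2 + ∑ z : α × β, px z.1 * py z.2) / 2 :=
          Finset.sum_mul_apply_div_le _
            (fun t ht ↦ hg t ▸ sq_sub_one_div_two_mul_add_one_le ht) hP hQ
      _ = 1 := by rw [Fintype.sum_prod_type', hp1, hsQ]; norm_num
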